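/- (Theorem 1(iii), coordinate version.) Let U ⊆ ℝⁿ be open with a metric g and an affine connection D given by Christoffel symbols Γ. If the Sasaki metric g̃^D on TU = U × ℝⁿ is Einstein, i.e. there is a constant λ with Ric̃(a)(A,B) = λ · g̃^D(a)(A,B) for all a ∈ TU and A, B ∈ ℝ²ⁿ, then the curvature of D vanishes: R^D(x) = 0 for all x ∈ U. -/

import Mathlib

/-!
STATEMENT 13 (Theorem 1(iii)): if the Sasaki metric g̃^D on TU is Einstein, then
the curvature of D vanishes.
-/

open scoped BigOperators

/-- Curvature of the connection with Christoffel symbols `Γ`. -/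
noncomputable def curv {n : ℕ}
    (Γ : (Fin n → ℝ) → (Fin n → ℝ) →L[ℝ] (Fin n → ℝ) →L[ℝ] (Fin n → ℝ))
    (x v w z : Fin n → ℝ) : Fin n → ℝ :=
  fderiv ℝ Γ x v w z - fderiv ℝ Γ x w v z + Γ x v (Γ x w z) - Γ x w (Γ x v z)

/-- Horizontal lift of `v` at `(x,ξ)`. -/
noncomputable def hor {n : ℕ}
    (Γ : (Fin n → ℝ) → (Fin n → ℝ) →L[ℝ] (Fin n → ℝ) →L[ℝ] (Fin n → ℝ))
    (x ξ v : Fin n → ℝ) : (Fin n → ℝ) × (Fin n → ℝ) :=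
  (v, -(Γ x v ξ))

/-- Vertical lift of `v`. -/
def ver {n : ℕ} (v : Fin n → ℝ) : (Fin n → ℝ) × (Fin n → ℝ) :=
  (0, v)

/-- The Sasaki metric `g̃^D` at `(x,ξ)`. -/
noncomputable def sasaki {n : ℕ}
    (g : (Fin n → ℝ) → (Fin n → ℝ) →L[ℝ] (Fin n → ℝ) →L[ℝ] ℝ)
    (Γ : (Fin n → ℝ) → (Fin n → ℝ) →L[ℝ] (Fin n → ℝ) →L[ℝ] (Fin n → ℝ))
    (x ξ : Fin n → ℝ) (A B : (Fin n → ℝ) × (Fin n → ℝ)) : ℝ :=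
  g x A.1 B.1 + g x (A.2 + Γ x A.1 ξ) (B.2 + Γ x B.1 ξ)

/-- The Riemannian curvature of the connection on TU with Christoffel symbols `Γ̃`. -/
noncomputable def curvT {n : ℕ}
    (Γt : (Fin n → ℝ) × (Fin n → ℝ) →
      ((Fin n → ℝ) × (Fin n → ℝ)) →L[ℝ] ((Fin n → ℝ) × (Fin n → ℝ)) →L[ℝ]
        ((Fin n → ℝ) × (Fin n → ℝ)))
    (a : (Fin n → ℝ) × (Fin n → ℝ)) (A B C : (Fin n → ℝ) × (Fin n → ℝ)) :
    (Fin n → ℝ) × (Fin n → ℝ) :=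
  fderiv ℝ Γt a A B C - fderiv ℝ Γt a B A C + Γt a A (Γt a B C) - Γt a B (Γt a A C)

/-- The Ricci tensor of the Sasaki metric, computed with respect to the
g̃^D-orthonormal basis `{(e i)^H, (e i)^V}` of ℝ²ⁿ obtained by lifting a
g-orthonormal basis `e` of ℝⁿ (the trace is independent of this choice). -/
noncomputable def ricciT {n : ℕ}
    (g : (Fin n → ℝ) → (Fin n → ℝ) →L[ℝ] (Fin n → ℝ) →L[ℝ] ℝ)
    (Γ : (Fin n → ℝ) → (Fin n → ℝ) →L[ℝ] (Fin n → ℝ) →L[ℝ] (Fin n → ℝ))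
    (Γt : (Fin n → ℝ) × (Fin n → ℝ) →
      ((Fin n → ℝ) × (Fin n → ℝ)) →L[ℝ] ((Fin n → ℝ) × (Fin n → ℝ)) →L[ℝ]
        ((Fin n → ℝ) × (Fin n → ℝ)))
    (e : (Fin n → ℝ) → Fin n → (Fin n → ℝ))
    (a : (Fin n → ℝ) × (Fin n → ℝ)) (A B : (Fin n → ℝ) × (Fin n → ℝ)) : ℝ :=
  ∑ i,
    (sasaki g Γ a.1 a.2 (curvT Γt a (hor Γ a.1 a.2 (e a.1 i)) B A)
        (hor Γ a.1 a.2 (e a.1 i))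
      + sasaki g Γ a.1 a.2 (curvT Γt a (ver (e a.1 i)) B A) (ver (e a.1 i)))

set_option maxHeartbeats 1000000
set_option synthInstance.maxHeartbeats 400000

section Aux

variable {n : ℕ}
  (g : (Fin n → ℝ) → (Fin n → ℝ) →L[ℝ] (Fin n → ℝ) →L[ℝ] ℝ)
  (Γ : (Fin n → ℝ) → (Fin n → ℝ) →L[ℝ] (Fin n → ℝ) →L[ℝ] (Fin n → ℝ))
  (Γt : (Fin n → ℝ) × (Fin n → ℝ) →
      ((Fin n → ℝ) × (Fin n → ℝ)) →L[ℝ] ((Fin n → ℝ) × (Fin n → ℝ)) →L[ℝ]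
        ((Fin n → ℝ) × (Fin n → ℝ)))

lemma pair_hor (y η c : Fin n → ℝ) (Y : (Fin n → ℝ) × (Fin n → ℝ)) :
    sasaki g Γ y η Y (hor Γ y η c) = g y Y.1 c := by
  simp [sasaki, hor, neg_add_cancel]

lemma pair_ver (y η c : Fin n → ℝ) (Y : (Fin n → ℝ) × (Fin n → ℝ)) :
    sasaki g Γ y η Y (ver c) = g y (Y.2 + Γ y Y.1 η) c := by
  simp [sasaki, ver]

lemma sasaki_symm {U : Set (Fin n → ℝ)}
    (hgsymm : ∀ x ∈ U, ∀ v w : Fin n → ℝ, g x v w = g x w v)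
    {y : Fin n → ℝ} (hy : y ∈ U) (η : Fin n → ℝ) (P Q : (Fin n → ℝ) × (Fin n → ℝ)) :
    sasaki g Γ y η P Q = sasaki g Γ y η Q P := by
  simp only [sasaki]
  rw [hgsymm y hy P.1 Q.1, hgsymm y hy (P.2 + Γ y P.1 η) (Q.2 + Γ y Q.1 η)]

lemma g_inj {U : Set (Fin n → ℝ)}
    (hgpos : ∀ x ∈ U, ∀ v : Fin n → ℝ, v ≠ 0 → 0 < g x v v)
    {y : Fin n → ℝ} (hy : y ∈ U) {u u' : Fin n → ℝ}
    (h : ∀ c, g y u c = g y u' c) : u = u' := by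
  by_contra hne
  have h0 : ∀ c, g y (u - u') c = 0 := by
    intro c
    rw [map_sub, ContinuousLinearMap.sub_apply, h c, sub_self]
  have := hgpos y hy (u - u') (sub_ne_zero.mpr hne)
  rw [h0] at this
  exact lt_irrefl _ this

lemma phi_formula {U : Set (Fin n → ℝ)} (hU : IsOpen U)
    (hg : ContDiffOn ℝ (⊤ : ℕ∞) g U) (hΓ : ContDiffOn ℝ (⊤ : ℕ∞) Γ U)
    {y : Fin n → ℝ} (hy : y ∈ U) (η : Fin n → ℝ)
    (B C X : (Fin n → ℝ) × (Fin n → ℝ)) :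
    fderiv ℝ (fun p : (Fin n → ℝ) × (Fin n → ℝ) => sasaki g Γ p.1 p.2 B C) (y, η) X =
      fderiv ℝ g y X.1 B.1 C.1
      + fderiv ℝ g y X.1 (B.2 + Γ y B.1 η) (C.2 + Γ y C.1 η)
      + g y (fderiv ℝ Γ y X.1 B.1 η + Γ y B.1 X.2) (C.2 + Γ y C.1 η)
      + g y (B.2 + Γ y B.1 η) (fderiv ℝ Γ y X.1 C.1 η + Γ y C.1 X.2) := by
  have hgd : HasFDerivAt g (fderiv ℝ g y) y :=
    (((hg.contDiffAt (hU.mem_nhds hy)).differentiableAt (by simp))).hasFDerivAt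
  have hΓd : HasFDerivAt Γ (fderiv ℝ Γ y) y :=
    (((hΓ.contDiffAt (hU.mem_nhds hy)).differentiableAt (by simp))).hasFDerivAt
  have h1 : HasFDerivAt (fun p : (Fin n → ℝ) × (Fin n → ℝ) => g p.1)
      ((fderiv ℝ g y).comp (ContinuousLinearMap.fst ℝ _ _)) (y, η) :=
    HasFDerivAt.comp (G := (Fin n → ℝ) →L[ℝ] (Fin n → ℝ) →L[ℝ] ℝ) (y, η) hgd (hasFDerivAt_fst (𝕜 := ℝ) (p := (y, η)))
  have hΓ1 : HasFDerivAt (fun p : (Fin n → ℝ) × (Fin n → ℝ) => Γ p.1)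
      ((fderiv ℝ Γ y).comp (ContinuousLinearMap.fst ℝ _ _)) (y, η) :=
    HasFDerivAt.comp (G := (Fin n → ℝ) →L[ℝ] (Fin n → ℝ) →L[ℝ] (Fin n → ℝ)) (y, η) hΓd (hasFDerivAt_fst (𝕜 := ℝ) (p := (y, η)))
  have hKB := (((hΓ1.clm_apply (hasFDerivAt_const B.1 _)).clm_apply
      hasFDerivAt_snd).const_add B.2)
  have hKC := (((hΓ1.clm_apply (hasFDerivAt_const C.1 _)).clm_apply
      hasFDerivAt_snd).const_add C.2)
  have H := ((h1.clm_apply (hasFDerivAt_const B.1 _)).clm_apply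
      (hasFDerivAt_const C.1 _)).add ((h1.clm_apply hKB).clm_apply hKC)
  have H' : HasFDerivAt (fun p : (Fin n → ℝ) × (Fin n → ℝ) => sasaki g Γ p.1 p.2 B C) _ (y, η) := H
  rw [H'.fderiv]
  simp only [ContinuousLinearMap.add_apply, ContinuousLinearMap.coe_comp',
    Function.comp_apply, ContinuousLinearMap.flip_apply, ContinuousLinearMap.coe_fst',
    ContinuousLinearMap.coe_snd', ContinuousLinearMap.zero_apply, map_zero,
    ContinuousLinearMap.comp_zero, ContinuousLinearMap.zero_comp, zero_add, add_zero,
    map_add, ContinuousLinearMap.add_comp, ContinuousLinearMap.comp_apply]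
  ring

end Aux
section Aux2

variable {n : ℕ}
  {g : (Fin n → ℝ) → (Fin n → ℝ) →L[ℝ] (Fin n → ℝ) →L[ℝ] ℝ}
  {Γ : (Fin n → ℝ) → (Fin n → ℝ) →L[ℝ] (Fin n → ℝ) →L[ℝ] (Fin n → ℝ)}
  {Γt : (Fin n → ℝ) × (Fin n → ℝ) →
      ((Fin n → ℝ) × (Fin n → ℝ)) →L[ℝ] ((Fin n → ℝ) × (Fin n → ℝ)) →L[ℝ]
        ((Fin n → ℝ) × (Fin n → ℝ))}
  {U : Set (Fin n → ℝ)}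

lemma koszul
    (hgsymm : ∀ x ∈ U, ∀ v w : Fin n → ℝ, g x v w = g x w v)
    (hΓtsymm : ∀ a : (Fin n → ℝ) × (Fin n → ℝ), a.1 ∈ U →
      ∀ A B : (Fin n → ℝ) × (Fin n → ℝ), Γt a A B = Γt a B A)
    (hΓtcompat : ∀ a : (Fin n → ℝ) × (Fin n → ℝ), a.1 ∈ U →
      ∀ A B C : (Fin n → ℝ) × (Fin n → ℝ),
        fderiv ℝ (fun p => sasaki g Γ p.1 p.2 B C) a A
          = sasaki g Γ a.1 a.2 (Γt a A B) C + sasaki g Γ a.1 a.2 B (Γt a A C))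
    {y : Fin n → ℝ} (hy : y ∈ U) (η : Fin n → ℝ)
    (A B C : (Fin n → ℝ) × (Fin n → ℝ)) :
    2 * sasaki g Γ y η (Γt (y, η) A B) C =
      fderiv ℝ (fun p => sasaki g Γ p.1 p.2 B C) (y, η) A
      + fderiv ℝ (fun p => sasaki g Γ p.1 p.2 A C) (y, η) B
      - fderiv ℝ (fun p => sasaki g Γ p.1 p.2 A B) (y, η) C := by
  have hy' : ((y, η) : (Fin n → ℝ) × (Fin n → ℝ)).1 ∈ U := hy
  rw [hΓtcompat _ hy' A B C, hΓtcompat _ hy' B A C, hΓtcompat _ hy' C A B]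
  simp only []
  rw [hΓtsymm _ hy' B A, hΓtsymm _ hy' C A, hΓtsymm _ hy' C B]
  rw [sasaki_symm g Γ hgsymm hy η B (Γt (y,η) A C),
      sasaki_symm g Γ hgsymm hy η A (Γt (y,η) B C)]
  ring

lemma master_hor (hU : IsOpen U)
    (hg : ContDiffOn ℝ (⊤ : ℕ∞) g U) (hΓ : ContDiffOn ℝ (⊤ : ℕ∞) Γ U)
    (hgsymm : ∀ x ∈ U, ∀ v w : Fin n → ℝ, g x v w = g x w v)
    (hΓtsymm : ∀ a : (Fin n → ℝ) × (Fin n → ℝ), a.1 ∈ U →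
      ∀ A B : (Fin n → ℝ) × (Fin n → ℝ), Γt a A B = Γt a B A)
    (hΓtcompat : ∀ a : (Fin n → ℝ) × (Fin n → ℝ), a.1 ∈ U →
      ∀ A B C : (Fin n → ℝ) × (Fin n → ℝ),
        fderiv ℝ (fun p => sasaki g Γ p.1 p.2 B C) a A
          = sasaki g Γ a.1 a.2 (Γt a A B) C + sasaki g Γ a.1 a.2 B (Γt a A C))
    {y : Fin n → ℝ} (hy : y ∈ U) (η : Fin n → ℝ)
    (A B : (Fin n → ℝ) × (Fin n → ℝ)) (c : Fin n → ℝ) :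
    2 * g y (Γt (y, η) A B).1 c =
      fderiv ℝ g y A.1 B.1 c
      + g y (B.2 + Γ y B.1 η) (fderiv ℝ Γ y A.1 c η + Γ y c A.2)
      + fderiv ℝ g y B.1 A.1 c
      + g y (A.2 + Γ y A.1 η) (fderiv ℝ Γ y B.1 c η + Γ y c B.2)
      - (fderiv ℝ g y c A.1 B.1
         + fderiv ℝ g y c (A.2 + Γ y A.1 η) (B.2 + Γ y B.1 η)
         + g y (fderiv ℝ Γ y c A.1 η + Γ y A.1 (-(Γ y c η))) (B.2 + Γ y B.1 η)
         + g y (A.2 + Γ y A.1 η) (fderiv ℝ Γ y c B.1 η + Γ y B.1 (-(Γ y c η)))) := by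
  have hk := koszul hgsymm hΓtsymm hΓtcompat hy η A B (hor Γ y η c)
  rw [pair_hor] at hk
  rw [phi_formula g Γ hU hg hΓ hy η B (hor Γ y η c) A,
      phi_formula g Γ hU hg hΓ hy η A (hor Γ y η c) B,
      phi_formula g Γ hU hg hΓ hy η A B (hor Γ y η c)] at hk
  simp only [hor, neg_add_cancel, ContinuousLinearMap.map_zero, add_zero, zero_add] at hk
  rw [hk]
  ring

lemma master_ver (hU : IsOpen U)
    (hg : ContDiffOn ℝ (⊤ : ℕ∞) g U) (hΓ : ContDiffOn ℝ (⊤ : ℕ∞) Γ U)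
    (hgsymm : ∀ x ∈ U, ∀ v w : Fin n → ℝ, g x v w = g x w v)
    (hΓtsymm : ∀ a : (Fin n → ℝ) × (Fin n → ℝ), a.1 ∈ U →
      ∀ A B : (Fin n → ℝ) × (Fin n → ℝ), Γt a A B = Γt a B A)
    (hΓtcompat : ∀ a : (Fin n → ℝ) × (Fin n → ℝ), a.1 ∈ U →
      ∀ A B C : (Fin n → ℝ) × (Fin n → ℝ),
        fderiv ℝ (fun p => sasaki g Γ p.1 p.2 B C) a A
          = sasaki g Γ a.1 a.2 (Γt a A B) C + sasaki g Γ a.1 a.2 B (Γt a A C))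
    {y : Fin n → ℝ} (hy : y ∈ U) (η : Fin n → ℝ)
    (A B : (Fin n → ℝ) × (Fin n → ℝ)) (c : Fin n → ℝ) :
    2 * g y ((Γt (y, η) A B).2 + Γ y (Γt (y, η) A B).1 η) c =
      fderiv ℝ g y A.1 (B.2 + Γ y B.1 η) c
      + g y (fderiv ℝ Γ y A.1 B.1 η + Γ y B.1 A.2) c
      + fderiv ℝ g y B.1 (A.2 + Γ y A.1 η) c
      + g y (fderiv ℝ Γ y B.1 A.1 η + Γ y A.1 B.2) c
      - g y (Γ y A.1 c) (B.2 + Γ y B.1 η)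
      - g y (A.2 + Γ y A.1 η) (Γ y B.1 c) := by
  have hk := koszul hgsymm hΓtsymm hΓtcompat hy η A B (ver c)
  rw [pair_ver] at hk
  rw [phi_formula g Γ hU hg hΓ hy η B (ver c) A,
      phi_formula g Γ hU hg hΓ hy η A (ver c) B,
      phi_formula g Γ hU hg hΓ hy η A B (ver c)] at hk
  simp only [ver, ContinuousLinearMap.map_zero, map_zero, ContinuousLinearMap.zero_apply, add_zero, zero_add] at hk
  rw [hk]
  ring

end Aux2
section Aux3

variable {n : ℕ}
  {g : (Fin n → ℝ) → (Fin n → ℝ) →L[ℝ] (Fin n → ℝ) →L[ℝ] ℝ}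
  {Γ : (Fin n → ℝ) → (Fin n → ℝ) →L[ℝ] (Fin n → ℝ) →L[ℝ] (Fin n → ℝ)}
  {Γt : (Fin n → ℝ) × (Fin n → ℝ) →
      ((Fin n → ℝ) × (Fin n → ℝ)) →L[ℝ] ((Fin n → ℝ) × (Fin n → ℝ)) →L[ℝ]
        ((Fin n → ℝ) × (Fin n → ℝ))}
  {U : Set (Fin n → ℝ)}

variable (hU : IsOpen U)
    (hg : ContDiffOn ℝ (⊤ : ℕ∞) g U) (hΓ : ContDiffOn ℝ (⊤ : ℕ∞) Γ U)
    (hgsymm : ∀ x ∈ U, ∀ v w : Fin n → ℝ, g x v w = g x w v)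
    (hgpos : ∀ x ∈ U, ∀ v : Fin n → ℝ, v ≠ 0 → 0 < g x v v)
    (hΓtsymm : ∀ a : (Fin n → ℝ) × (Fin n → ℝ), a.1 ∈ U →
      ∀ A B : (Fin n → ℝ) × (Fin n → ℝ), Γt a A B = Γt a B A)
    (hΓtcompat : ∀ a : (Fin n → ℝ) × (Fin n → ℝ), a.1 ∈ U →
      ∀ A B C : (Fin n → ℝ) × (Fin n → ℝ),
        fderiv ℝ (fun p => sasaki g Γ p.1 p.2 B C) a A
          = sasaki g Γ a.1 a.2 (Γt a A B) C + sasaki g Γ a.1 a.2 B (Γt a A C))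

include hU hg hΓ hgsymm hgpos hΓtsymm hΓtcompat

/-- vertical-vertical Christoffel: explicit fiber dependence -/
lemma vv_form {y : Fin n → ℝ} (hy : y ∈ U) (η u w : Fin n → ℝ) :
    Γt (y, η) (0, u) (0, w)
      = ((Γt (y, 0) (0, u) (0, w)).1, -(Γ y (Γt (y, 0) (0, u) (0, w)).1 η)) := by
  have hfst : ∀ η' : Fin n → ℝ, (Γt (y, η') (0, u) (0, w)).1 = (Γt (y, 0) (0, u) (0, w)).1 := by
    intro η'
    have key : ∀ η' : Fin n → ℝ, ∀ c, 2 * g y (Γt (y, η') (0, u) (0, w)).1 c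
        = g y w (Γ y c u) + g y u (Γ y c w) - fderiv ℝ g y c u w := by
      intro η' c
      have h := master_hor hU hg hΓ hgsymm hΓtsymm hΓtcompat hy η' (0, u) (0, w) c
      simp only [ContinuousLinearMap.map_zero, map_zero, ContinuousLinearMap.zero_apply,
        zero_add, add_zero, map_neg, ContinuousLinearMap.neg_apply, neg_zero] at h
      linarith [h]
    apply g_inj g hgpos hy
    intro c
    have h1 := key η' c
    have h2 := key 0 c
    linarith
  have hK : (Γt (y, η) (0, u) (0, w)).2 + Γ y (Γt (y, η) (0, u) (0, w)).1 η = 0 := by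
    apply g_inj g hgpos hy
    intro c
    have h := master_ver hU hg hΓ hgsymm hΓtsymm hΓtcompat hy η (0, u) (0, w) c
    simp only [ContinuousLinearMap.map_zero, map_zero, ContinuousLinearMap.zero_apply,
      zero_add, add_zero] at h
    simp only [map_zero, ContinuousLinearMap.zero_apply]
    linarith [h]
  have h2 := eq_neg_of_add_eq_zero_left hK
  rw [hfst η] at h2
  exact Prod.ext (hfst η) h2


/-- characterization of the horizontal part of `Γt a (hor u) (ver v)` : curvature pairing -/
lemma q_char {x : Fin n → ℝ} (hx : x ∈ U) (ζ u v c : Fin n → ℝ) :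
    2 * g x (Γt (x, ζ) (hor Γ x ζ u) ((0 : Fin n → ℝ), v)).1 c
      = g x v (curv Γ x u c ζ) := by
  have h := master_hor hU hg hΓ hgsymm hΓtsymm hΓtcompat hx ζ (hor Γ x ζ u) (0, v) c
  simp only [hor, neg_add_cancel, ContinuousLinearMap.map_zero, map_zero,
    ContinuousLinearMap.zero_apply, zero_add, add_zero] at h
  simp only [hor, curv, map_sub, map_add, map_neg, ContinuousLinearMap.sub_apply,
    ContinuousLinearMap.add_apply, ContinuousLinearMap.neg_apply] at h ⊢
  have s1 := hgsymm x hx v (fderiv ℝ Γ x c u ζ)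
  have s2 := hgsymm x hx v (Γ x u (Γ x c ζ))
  linarith [h, s1, s2]

/-- the `K`-part of `Γt a (hor u) (ver v)` is independent of the fiber -/
lemma k_char {x : Fin n → ℝ} (hx : x ∈ U) (ξ u v c : Fin n → ℝ) :
    2 * g x ((Γt (x, ξ) (hor Γ x ξ u) ((0 : Fin n → ℝ), v)).2
        + Γ x (Γt (x, ξ) (hor Γ x ξ u) ((0 : Fin n → ℝ), v)).1 ξ) c
      = fderiv ℝ g x u v c + g x (Γ x u v) c - g x (Γ x u c) v := by
  have h := master_ver hU hg hΓ hgsymm hΓtsymm hΓtcompat hx ξ (hor Γ x ξ u) (0, v) c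
  simp only [hor, neg_add_cancel, ContinuousLinearMap.map_zero, map_zero,
    ContinuousLinearMap.zero_apply, zero_add, add_zero] at h
  simp only [hor]
  linarith [h]

end Aux3
section Aux4

set_option linter.unusedSectionVars false

variable {n : ℕ}
  {g : (Fin n → ℝ) → (Fin n → ℝ) →L[ℝ] (Fin n → ℝ) →L[ℝ] ℝ}
  {Γ : (Fin n → ℝ) → (Fin n → ℝ) →L[ℝ] (Fin n → ℝ) →L[ℝ] (Fin n → ℝ)}
  {Γt : (Fin n → ℝ) × (Fin n → ℝ) →
      ((Fin n → ℝ) × (Fin n → ℝ)) →L[ℝ] ((Fin n → ℝ) × (Fin n → ℝ)) →L[ℝ]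
        ((Fin n → ℝ) × (Fin n → ℝ))}
  {U : Set (Fin n → ℝ)}

variable (hU : IsOpen U)
    (hg : ContDiffOn ℝ (⊤ : ℕ∞) g U) (hΓ : ContDiffOn ℝ (⊤ : ℕ∞) Γ U)
    (hgsymm : ∀ x ∈ U, ∀ v w : Fin n → ℝ, g x v w = g x w v)
    (hgpos : ∀ x ∈ U, ∀ v : Fin n → ℝ, v ≠ 0 → 0 < g x v v)
    (hΓt : ContDiffOn ℝ (⊤ : ℕ∞) Γt {p | p.1 ∈ U})
    (hΓtsymm : ∀ a : (Fin n → ℝ) × (Fin n → ℝ), a.1 ∈ U →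
      ∀ A B : (Fin n → ℝ) × (Fin n → ℝ), Γt a A B = Γt a B A)
    (hΓtcompat : ∀ a : (Fin n → ℝ) × (Fin n → ℝ), a.1 ∈ U →
      ∀ A B C : (Fin n → ℝ) × (Fin n → ℝ),
        fderiv ℝ (fun p => sasaki g Γ p.1 p.2 B C) a A
          = sasaki g Γ a.1 a.2 (Γt a A B) C + sasaki g Γ a.1 a.2 B (Γt a A C))

include hU in
lemma openTU : IsOpen {p : (Fin n → ℝ) × (Fin n → ℝ) | p.1 ∈ U} :=
  hU.preimage continuous_fst

include hU hΓt in
lemma diffGammaT {a : (Fin n → ℝ) × (Fin n → ℝ)} (ha : a.1 ∈ U) :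
    DifferentiableAt ℝ Γt a :=
  (hΓt.contDiffAt ((openTU hU).mem_nhds ha)).differentiableAt (by simp)

include hU hΓt in
/-- vertical directional derivative computed in the fiber -/
lemma fiber_fderiv {x : Fin n → ℝ} (hx : x ∈ U) (η w : Fin n → ℝ)
    (B C : (Fin n → ℝ) × (Fin n → ℝ)) :
    fderiv ℝ Γt (x, η) ((0 : Fin n → ℝ), w) B C
      = fderiv ℝ (fun s => Γt (x, s) B C) η w := by
  have hι : HasFDerivAt (fun s : Fin n → ℝ => ((x, s) : (Fin n → ℝ) × (Fin n → ℝ)))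
      ((0 : (Fin n → ℝ) →L[ℝ] (Fin n → ℝ)).prod (ContinuousLinearMap.id ℝ _)) η :=
    HasFDerivAt.prodMk (hasFDerivAt_const x η) (hasFDerivAt_id η)
  have h0 : HasFDerivAt (fun s : Fin n → ℝ => Γt (x, s)) _ η :=
    HasFDerivAt.comp (G := (((Fin n → ℝ) × (Fin n → ℝ)) →L[ℝ] ((Fin n → ℝ) × (Fin n → ℝ)) →L[ℝ] ((Fin n → ℝ) × (Fin n → ℝ)))) η ((diffGammaT hU hΓt (show ((x, η) : _ × _).1 ∈ U from hx)).hasFDerivAt) hι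
  have h1 := (h0.clm_apply (hasFDerivAt_const B η)).clm_apply (hasFDerivAt_const C η)
  rw [h1.fderiv]
  simp [ContinuousLinearMap.comp_apply, ContinuousLinearMap.prod_apply]

include hU hg hΓ hgsymm hgpos hΓt hΓtsymm hΓtcompat in
/-- derivative of vertical-vertical Christoffel in vertical directions -/
lemma vv_fderiv {x : Fin n → ℝ} (hx : x ∈ U) (η u w d : Fin n → ℝ) :
    fderiv ℝ Γt (x, η) ((0 : Fin n → ℝ), d) ((0 : Fin n → ℝ), u) ((0 : Fin n → ℝ), w)
      = ((0 : Fin n → ℝ), -(Γ x (Γt (x, 0) (0, u) (0, w)).1 d)) := by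
  rw [fiber_fderiv hU hΓt hx]
  have hfun : (fun s => Γt (x, s) (0, u) (0, w))
      = fun s => (((Γt (x, 0) (0, u) (0, w)).1 : Fin n → ℝ),
          -(Γ x (Γt (x, 0) (0, u) (0, w)).1 s)) :=
    funext fun s => vv_form hU hg hΓ hgsymm hgpos hΓtsymm hΓtcompat hx s u w
  rw [hfun]
  have hD : HasFDerivAt (fun s : Fin n → ℝ =>
      (((Γt (x, 0) (0, u) (0, w)).1 : Fin n → ℝ),
        -(Γ x (Γt (x, 0) (0, u) (0, w)).1 s)))
      ((0 : (Fin n → ℝ) →L[ℝ] (Fin n → ℝ)).prod (-(Γ x (Γt (x, 0) (0, u) (0, w)).1))) η :=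
    HasFDerivAt.prodMk (hasFDerivAt_const _ η) ((Γ x (Γt (x, 0) (0, u) (0, w)).1).hasFDerivAt.neg)
  rw [hD.fderiv]
  simp [ContinuousLinearMap.prod_apply]

lemma affine_fderiv {φ : (Fin n → ℝ) → ℝ} (c0 : ℝ) (L : (Fin n → ℝ) →L[ℝ] ℝ)
    (hφ : ∀ s, φ s = c0 + L s) (η d : Fin n → ℝ) : fderiv ℝ φ η d = L d := by
  have h : φ = fun s => c0 + L s := funext hφ
  rw [h, (L.hasFDerivAt.const_add c0).fderiv]


include hU hg hΓ hgsymm hgpos hΓt hΓtsymm hΓtcompat in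
/-- vertical derivative of the horizontal-vertical Christoffel, first component,
paired against `c`.  The result does not depend on `η` nor on `b`. -/
lemma hv_fderiv_fst {x : Fin n → ℝ} (hx : x ∈ U) (η u b v d c : Fin n → ℝ) :
    g x ((fderiv ℝ Γt (x, η) ((0 : Fin n → ℝ), d) (u, b) ((0 : Fin n → ℝ), v)).1) c
      = (1/2) * (g x v (fderiv ℝ Γ x u c d) + g x (Γ x u d) (Γ x c v)
          - fderiv ℝ g x c (Γ x u d) v - g x (fderiv ℝ Γ x c u d) v
          + g x (Γ x u (Γ x c d)) v) := by
  rw [fiber_fderiv hU hΓt hx]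
  have hdF : DifferentiableAt ℝ (fun s => Γt (x, s) (u, b) ((0 : Fin n → ℝ), v)) η := by
    have h1 : DifferentiableAt ℝ (fun s : Fin n → ℝ => ((x, s) : _ × _)) η :=
      DifferentiableAt.prodMk (differentiableAt_const x) differentiableAt_id
    have h2 : DifferentiableAt ℝ (fun s : Fin n → ℝ => Γt (x, s)) η :=
      DifferentiableAt.comp (G := (((Fin n → ℝ) × (Fin n → ℝ)) →L[ℝ] ((Fin n → ℝ) × (Fin n → ℝ)) →L[ℝ] ((Fin n → ℝ) × (Fin n → ℝ)))) η (diffGammaT hU hΓt (show ((x, η) : _ × _).1 ∈ U from hx)) h1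
    exact (h2.clm_apply (differentiableAt_const _)).clm_apply (differentiableAt_const _)
  have hchain := ((((g x).flip c).comp
      (ContinuousLinearMap.fst ℝ (Fin n → ℝ) (Fin n → ℝ))).hasFDerivAt.comp η
        hdF.hasFDerivAt).fderiv
  have heval : g x ((fderiv ℝ (fun s => Γt (x, s) (u, b) ((0 : Fin n → ℝ), v)) η d).1) c
      = fderiv ℝ (⇑(((g x).flip c).comp (ContinuousLinearMap.fst ℝ (Fin n → ℝ) (Fin n → ℝ)))
          ∘ (fun s => Γt (x, s) (u, b) ((0 : Fin n → ℝ), v))) η d := by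
    rw [hchain]
    simp
  rw [heval,
    affine_fderiv ((1/2) * (g x v (Γ x c b) + g x b (Γ x c v) - fderiv ℝ g x c b v))
      ((1/2 : ℝ) • ((g x v).comp (fderiv ℝ Γ x u c)
        + ((g x).flip (Γ x c v)).comp (Γ x u)
        - ((fderiv ℝ g x c).flip v).comp (Γ x u)
        - ((g x).flip v).comp (fderiv ℝ Γ x c u)
        + ((g x).flip v).comp ((Γ x u).comp (Γ x c))))
      ?_ η d]
  · simp [ContinuousLinearMap.smul_apply, ContinuousLinearMap.add_apply,
      ContinuousLinearMap.sub_apply, ContinuousLinearMap.comp_apply,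
      ContinuousLinearMap.flip_apply, smul_eq_mul]
    ring
  · intro s
    have hm := master_hor hU hg hΓ hgsymm hΓtsymm hΓtcompat hx s (u, b)
      ((0 : Fin n → ℝ), v) c
    simp only [ContinuousLinearMap.map_zero, map_zero, ContinuousLinearMap.zero_apply,
      zero_add, add_zero, map_add, map_neg, ContinuousLinearMap.add_apply,
      ContinuousLinearMap.neg_apply] at hm
    simp only [Function.comp_apply, ContinuousLinearMap.comp_apply,
      ContinuousLinearMap.flip_apply, ContinuousLinearMap.coe_fst',
      ContinuousLinearMap.smul_apply, ContinuousLinearMap.add_apply,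
      ContinuousLinearMap.sub_apply, smul_eq_mul]
    linarith [hm]


include hU hg hΓ hgsymm hgpos hΓt hΓtsymm hΓtcompat in
/-- horizontal derivative of the vertical-vertical Christoffel, first component, is
independent of the fiber point. -/
lemma hh_fderiv_fst {x : Fin n → ℝ} (hx : x ∈ U) (η v d c : Fin n → ℝ) :
    g x ((fderiv ℝ Γt (x, η) ((d, (0 : Fin n → ℝ)))
        ((0 : Fin n → ℝ), v) ((0 : Fin n → ℝ), v)).1) c
      = g x ((fderiv ℝ Γt (x, (0 : Fin n → ℝ)) ((d, (0 : Fin n → ℝ)))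
        ((0 : Fin n → ℝ), v) ((0 : Fin n → ℝ), v)).1) c := by
  set M := (Fin n → ℝ) × (Fin n → ℝ)
  set ℓ : (M →L[ℝ] M →L[ℝ] M) →L[ℝ] ℝ :=
    ((g x).flip c).comp ((ContinuousLinearMap.fst ℝ (Fin n → ℝ) (Fin n → ℝ)).comp
      ((ContinuousLinearMap.apply ℝ M (((0 : Fin n → ℝ), v) : M)).comp
        (ContinuousLinearMap.apply ℝ (M →L[ℝ] M) (((0 : Fin n → ℝ), v) : M)))) with hℓ
  have hψd : ∀ a : M, a.1 ∈ U → HasFDerivAt (⇑ℓ ∘ Γt) (ℓ.comp (fderiv ℝ Γt a)) a :=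
    fun a ha => by
      have := HasFDerivAt.comp (f := Γt) (f' := fderiv ℝ Γt a) a (ℓ.hasFDerivAt (x := Γt a))
        (diffGammaT hU hΓt ha).hasFDerivAt
      exact this
  have heval : ∀ a : M, a.1 ∈ U → ∀ D : M,
      g x ((fderiv ℝ Γt a D ((0 : Fin n → ℝ), v) ((0 : Fin n → ℝ), v)).1) c
        = fderiv ℝ (⇑ℓ ∘ Γt) a D := by
    intro a ha D
    rw [(hψd a ha).fderiv]
    simp [hℓ]
  set τ : M →L[ℝ] M :=
    (ContinuousLinearMap.fst ℝ (Fin n → ℝ) (Fin n → ℝ)).prod 0 with hτ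
  have hτapp : ∀ p : M, τ p = (p.1, (0 : Fin n → ℝ)) := by
    intro p
    rfl
  have hee : (⇑ℓ ∘ Γt) =ᶠ[nhds ((x, η) : M)] ((⇑ℓ ∘ Γt) ∘ ⇑τ) := by
    filter_upwards [(openTU hU).mem_nhds (show ((x, η) : M).1 ∈ U from hx)] with p hp
    show ℓ (Γt p) = ℓ (Γt (τ p))
    rw [hτapp p]
    have h1 := vv_form hU hg hΓ hgsymm hgpos hΓtsymm hΓtcompat hp p.2 v v
    have h2 := vv_form hU hg hΓ hgsymm hgpos hΓtsymm hΓtcompat hp (0 : Fin n → ℝ) v v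
    simp only [hℓ, ContinuousLinearMap.comp_apply, ContinuousLinearMap.flip_apply,
      ContinuousLinearMap.apply_apply, ContinuousLinearMap.coe_fst',
      Function.comp_apply]
    rw [show p = ((p.1, p.2) : M) from rfl] at *
    rw [h1, h2]
  have heq := Filter.EventuallyEq.fderiv_eq (𝕜 := ℝ) hee
  have hτx : τ ((x, η) : M) = ((x, (0 : Fin n → ℝ)) : M) := hτapp _
  have hψd0 : HasFDerivAt (⇑ℓ ∘ Γt) (ℓ.comp (fderiv ℝ Γt ((x, (0 : Fin n → ℝ)) : M)))
      (τ ((x, η) : M)) := by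
    rw [hτx]; exact hψd _ hx
  have hcomp := (hψd0.comp ((x, η) : M) τ.hasFDerivAt).fderiv
  have e1 := heval ((x, η) : M) hx ((d, (0 : Fin n → ℝ)) : M)
  have e2 := heval ((x, (0 : Fin n → ℝ)) : M) hx ((d, (0 : Fin n → ℝ)) : M)
  rw [e1, e2, heq, hcomp]
  have h3 : τ ((d, (0 : Fin n → ℝ)) : M) = ((d, (0 : Fin n → ℝ)) : M) := hτapp _
  simp only [ContinuousLinearMap.comp_apply, h3]
  rw [(hψd ((x, (0 : Fin n → ℝ)) : M) hx).fderiv]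
  simp [ContinuousLinearMap.comp_apply]

end Aux4
section Aux5

set_option linter.unusedSectionVars false

variable {n : ℕ}
  {g : (Fin n → ℝ) → (Fin n → ℝ) →L[ℝ] (Fin n → ℝ) →L[ℝ] ℝ}
  {Γ : (Fin n → ℝ) → (Fin n → ℝ) →L[ℝ] (Fin n → ℝ) →L[ℝ] (Fin n → ℝ)}
  {Γt : (Fin n → ℝ) × (Fin n → ℝ) →
      ((Fin n → ℝ) × (Fin n → ℝ)) →L[ℝ] ((Fin n → ℝ) × (Fin n → ℝ)) →L[ℝ]
        ((Fin n → ℝ) × (Fin n → ℝ))}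
  {U : Set (Fin n → ℝ)}

variable (hU : IsOpen U)
    (hg : ContDiffOn ℝ (⊤ : ℕ∞) g U) (hΓ : ContDiffOn ℝ (⊤ : ℕ∞) Γ U)
    (hgsymm : ∀ x ∈ U, ∀ v w : Fin n → ℝ, g x v w = g x w v)
    (hgpos : ∀ x ∈ U, ∀ v : Fin n → ℝ, v ≠ 0 → 0 < g x v v)
    (hΓtsymm : ∀ a : (Fin n → ℝ) × (Fin n → ℝ), a.1 ∈ U →
      ∀ A B : (Fin n → ℝ) × (Fin n → ℝ), Γt a A B = Γt a B A)
    (hΓtcompat : ∀ a : (Fin n → ℝ) × (Fin n → ℝ), a.1 ∈ U →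
      ∀ A B C : (Fin n → ℝ) × (Fin n → ℝ),
        fderiv ℝ (fun p => sasaki g Γ p.1 p.2 B C) a A
          = sasaki g Γ a.1 a.2 (Γt a A B) C + sasaki g Γ a.1 a.2 B (Γt a A C))

lemma curv_swap (x u c ζ : Fin n → ℝ) : curv Γ x u c ζ = -curv Γ x c u ζ := by
  simp only [curv]
  abel

lemma curv_zero_last (x u c : Fin n → ℝ) : curv Γ x u c 0 = 0 := by
  simp [curv]

lemma curv_smul_last (x u c ζ : Fin n → ℝ) (t : ℝ) :
    curv Γ x u c (t • ζ) = t • curv Γ x u c ζ := by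
  simp only [curv, map_smul, smul_sub, smul_add]

include hU hg hΓ hgsymm hgpos hΓtsymm hΓtcompat in
/-- pairing of the horizontal part of `Γt a H₁ H₂` for two horizontal lifts -/
lemma hh_pair {x : Fin n → ℝ} (hx : x ∈ U) (ξ u1 u2 c : Fin n → ℝ) :
    2 * g x ((Γt (x, ξ) ((u1, -(Γ x u1 ξ)) : (Fin n → ℝ) × (Fin n → ℝ))
        ((u2, -(Γ x u2 ξ)) : (Fin n → ℝ) × (Fin n → ℝ))).1) c
      = fderiv ℝ g x u1 u2 c + fderiv ℝ g x u2 u1 c - fderiv ℝ g x c u1 u2 := by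
  have h := master_hor hU hg hΓ hgsymm hΓtsymm hΓtcompat hx ξ
    ((u1, -(Γ x u1 ξ))) ((u2, -(Γ x u2 ξ))) c
  simp only [neg_add_cancel, ContinuousLinearMap.map_zero, map_zero,
    ContinuousLinearMap.zero_apply, zero_add, add_zero] at h
  linarith [h]

include hU hg hΓ hgsymm hgpos hΓtsymm hΓtcompat in
/-- `K`-pairing of `Γt a (ver u') B`, depends only on `B.1` -/
lemma vK_pair {x : Fin n → ℝ} (hx : x ∈ U) (ξ u' c : Fin n → ℝ)
    (B : (Fin n → ℝ) × (Fin n → ℝ)) :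
    2 * g x ((Γt (x, ξ) ((0 : Fin n → ℝ), u') B).2
        + Γ x (Γt (x, ξ) ((0 : Fin n → ℝ), u') B).1 ξ) c
      = g x (Γ x B.1 u') c + fderiv ℝ g x B.1 u' c - g x u' (Γ x B.1 c) := by
  have h := master_ver hU hg hΓ hgsymm hΓtsymm hΓtcompat hx ξ
    ((0 : Fin n → ℝ), u') B c
  simp only [ContinuousLinearMap.map_zero, map_zero, ContinuousLinearMap.zero_apply,
    zero_add, add_zero] at h
  linarith [h]

include hU hg hΓ hgsymm hgpos hΓtsymm hΓtcompat in
/-- pairing of the horizontal part of `Γt a (ver v) B` -/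
lemma vH_pair {x : Fin n → ℝ} (hx : x ∈ U) (ξ v c : Fin n → ℝ)
    (B : (Fin n → ℝ) × (Fin n → ℝ)) :
    2 * g x ((Γt (x, ξ) ((0 : Fin n → ℝ), v) B).1) c
      = g x (B.2 + Γ x B.1 ξ) (Γ x c v)
        + g x v (fderiv ℝ Γ x B.1 c ξ + Γ x c B.2)
        - fderiv ℝ g x c v (B.2 + Γ x B.1 ξ)
        - g x v (fderiv ℝ Γ x c B.1 ξ + Γ x B.1 (-(Γ x c ξ))) := by
  have h := master_hor hU hg hΓ hgsymm hΓtsymm hΓtcompat hx ξ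
    ((0 : Fin n → ℝ), v) B c
  simp only [ContinuousLinearMap.map_zero, map_zero, ContinuousLinearMap.zero_apply,
    zero_add, add_zero] at h
  linarith [h]

end Aux5
section Aux6
set_option linter.unusedSectionVars false
variable {n : ℕ}
  {g : (Fin n → ℝ) → (Fin n → ℝ) →L[ℝ] (Fin n → ℝ) →L[ℝ] ℝ}
  {Γ : (Fin n → ℝ) → (Fin n → ℝ) →L[ℝ] (Fin n → ℝ) →L[ℝ] (Fin n → ℝ)}
  {Γt : (Fin n → ℝ) × (Fin n → ℝ) →
      ((Fin n → ℝ) × (Fin n → ℝ)) →L[ℝ] ((Fin n → ℝ) × (Fin n → ℝ)) →L[ℝ]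
        ((Fin n → ℝ) × (Fin n → ℝ))}
  {U : Set (Fin n → ℝ)}
variable (hU : IsOpen U)
    (hg : ContDiffOn ℝ (⊤ : ℕ∞) g U) (hΓ : ContDiffOn ℝ (⊤ : ℕ∞) Γ U)
    (hgsymm : ∀ x ∈ U, ∀ v w : Fin n → ℝ, g x v w = g x w v)
    (hgpos : ∀ x ∈ U, ∀ v : Fin n → ℝ, v ≠ 0 → 0 < g x v v)
    (hΓt : ContDiffOn ℝ (⊤ : ℕ∞) Γt {p | p.1 ∈ U})
    (hΓtsymm : ∀ a : (Fin n → ℝ) × (Fin n → ℝ), a.1 ∈ U →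
      ∀ A B : (Fin n → ℝ) × (Fin n → ℝ), Γt a A B = Γt a B A)
    (hΓtcompat : ∀ a : (Fin n → ℝ) × (Fin n → ℝ), a.1 ∈ U →
      ∀ A B C : (Fin n → ℝ) × (Fin n → ℝ),
        fderiv ℝ (fun p => sasaki g Γ p.1 p.2 B C) a A
          = sasaki g Γ a.1 a.2 (Γt a A B) C + sasaki g Γ a.1 a.2 B (Γt a A C))

include hU hg hΓ hgsymm hgpos hΓt hΓtsymm hΓtcompat in
lemma ver_term {x : Fin n → ℝ} (hx : x ∈ U) (v ζ : Fin n → ℝ) (t : ℝ) (u : Fin n → ℝ) :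
    sasaki g Γ x (t • ζ)
        (curvT Γt (x, t • ζ) (ver u) ((0 : Fin n → ℝ), v) ((0 : Fin n → ℝ), v)) (ver u)
      = sasaki g Γ x (0 : Fin n → ℝ)
        (curvT Γt (x, (0 : Fin n → ℝ)) (ver u) ((0 : Fin n → ℝ), v) ((0 : Fin n → ℝ), v))
        (ver u) := by
  rw [pair_ver, pair_ver]
  simp only [curvT, ver]
  rw [vv_form hU hg hΓ hgsymm hgpos hΓtsymm hΓtcompat hx (t • ζ) v v,
      vv_form hU hg hΓ hgsymm hgpos hΓtsymm hΓtcompat hx (0 : Fin n → ℝ) v v,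
      vv_form hU hg hΓ hgsymm hgpos hΓtsymm hΓtcompat hx (t • ζ) u v,
      vv_form hU hg hΓ hgsymm hgpos hΓtsymm hΓtcompat hx (0 : Fin n → ℝ) u v,
      vv_fderiv hU hg hΓ hgsymm hgpos hΓt hΓtsymm hΓtcompat hx (t • ζ) v v u,
      vv_fderiv hU hg hΓ hgsymm hgpos hΓt hΓtsymm hΓtcompat hx (0 : Fin n → ℝ) v v u,
      vv_fderiv hU hg hΓ hgsymm hgpos hΓt hΓtsymm hΓtcompat hx (t • ζ) u v v,
      vv_fderiv hU hg hΓ hgsymm hgpos hΓt hΓtsymm hΓtcompat hx (0 : Fin n → ℝ) u v v]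
  have e1 := vK_pair hU hg hΓ hgsymm hgpos hΓtsymm hΓtcompat hx (t • ζ) u u
    (((Γt (x, (0 : Fin n → ℝ)) (0, v) (0, v)).1,
      -(Γ x (Γt (x, (0 : Fin n → ℝ)) (0, v) (0, v)).1 (t • ζ))))
  have e2 := vK_pair hU hg hΓ hgsymm hgpos hΓtsymm hΓtcompat hx (t • ζ) v u
    (((Γt (x, (0 : Fin n → ℝ)) (0, u) (0, v)).1,
      -(Γ x (Γt (x, (0 : Fin n → ℝ)) (0, u) (0, v)).1 (t • ζ))))
  have e3 := vK_pair hU hg hΓ hgsymm hgpos hΓtsymm hΓtcompat hx (0 : Fin n → ℝ) u u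
    (((Γt (x, (0 : Fin n → ℝ)) (0, v) (0, v)).1,
      -(Γ x (Γt (x, (0 : Fin n → ℝ)) (0, v) (0, v)).1 (0 : Fin n → ℝ))))
  have e4 := vK_pair hU hg hΓ hgsymm hgpos hΓtsymm hΓtcompat hx (0 : Fin n → ℝ) v u
    (((Γt (x, (0 : Fin n → ℝ)) (0, u) (0, v)).1,
      -(Γ x (Γt (x, (0 : Fin n → ℝ)) (0, u) (0, v)).1 (0 : Fin n → ℝ))))
  simp only [Prod.mk_add_mk, Prod.mk_sub_mk, Prod.fst_add, Prod.fst_sub, Prod.snd_add, Prod.snd_sub, map_add, map_sub, map_neg, map_zero,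
    neg_zero, add_zero, zero_add, sub_zero, neg_neg,
    ContinuousLinearMap.add_apply, ContinuousLinearMap.sub_apply,
    ContinuousLinearMap.neg_apply, ContinuousLinearMap.zero_apply] at e1 e2 e3 e4 ⊢
  linarith [e1, e2, e3, e4]
end Aux6
section Aux7
set_option linter.unusedSectionVars false
set_option maxHeartbeats 2000000
set_option synthInstance.maxHeartbeats 400000
variable {n : ℕ}
  {g : (Fin n → ℝ) → (Fin n → ℝ) →L[ℝ] (Fin n → ℝ) →L[ℝ] ℝ}
  {Γ : (Fin n → ℝ) → (Fin n → ℝ) →L[ℝ] (Fin n → ℝ) →L[ℝ] (Fin n → ℝ)}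
  {Γt : (Fin n → ℝ) × (Fin n → ℝ) →
      ((Fin n → ℝ) × (Fin n → ℝ)) →L[ℝ] ((Fin n → ℝ) × (Fin n → ℝ)) →L[ℝ]
        ((Fin n → ℝ) × (Fin n → ℝ))}
  {U : Set (Fin n → ℝ)}
variable (hU : IsOpen U)
    (hg : ContDiffOn ℝ (⊤ : ℕ∞) g U) (hΓ : ContDiffOn ℝ (⊤ : ℕ∞) Γ U)
    (hgsymm : ∀ x ∈ U, ∀ v w : Fin n → ℝ, g x v w = g x w v)
    (hgpos : ∀ x ∈ U, ∀ v : Fin n → ℝ, v ≠ 0 → 0 < g x v v)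
    (hΓt : ContDiffOn ℝ (⊤ : ℕ∞) Γt {p | p.1 ∈ U})
    (hΓtsymm : ∀ a : (Fin n → ℝ) × (Fin n → ℝ), a.1 ∈ U →
      ∀ A B : (Fin n → ℝ) × (Fin n → ℝ), Γt a A B = Γt a B A)
    (hΓtcompat : ∀ a : (Fin n → ℝ) × (Fin n → ℝ), a.1 ∈ U →
      ∀ A B C : (Fin n → ℝ) × (Fin n → ℝ),
        fderiv ℝ (fun p => sasaki g Γ p.1 p.2 B C) a A
          = sasaki g Γ a.1 a.2 (Γt a A B) C + sasaki g Γ a.1 a.2 B (Γt a A C))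

include hU hg hΓ hgsymm hgpos hΓt hΓtsymm hΓtcompat in
lemma hor_term {x : Fin n → ℝ} (hx : x ∈ U) (v ζ : Fin n → ℝ) (t : ℝ) (u : Fin n → ℝ) :
    sasaki g Γ x (t • ζ)
        (curvT Γt (x, t • ζ) (hor Γ x (t • ζ) u) ((0 : Fin n → ℝ), v) ((0 : Fin n → ℝ), v))
        (hor Γ x (t • ζ) u)
      = sasaki g Γ x (0 : Fin n → ℝ)
          (curvT Γt (x, (0 : Fin n → ℝ)) (hor Γ x (0 : Fin n → ℝ) u)
            ((0 : Fin n → ℝ), v) ((0 : Fin n → ℝ), v)) (hor Γ x (0 : Fin n → ℝ) u)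
        + t ^ 2 * g x (Γt (x, ζ) (hor Γ x ζ u) ((0 : Fin n → ℝ), v)).1
            (Γt (x, ζ) (hor Γ x ζ u) ((0 : Fin n → ℝ), v)).1 := by
  have hT1 : g x ((fderiv ℝ Γt (x, t • ζ) (hor Γ x (t • ζ) u)
        ((0 : Fin n → ℝ), v) ((0 : Fin n → ℝ), v)).1) u
      = g x ((fderiv ℝ Γt (x, (0 : Fin n → ℝ)) (hor Γ x (0 : Fin n → ℝ) u)
        ((0 : Fin n → ℝ), v) ((0 : Fin n → ℝ), v)).1) u := by
    have hsplit : ∀ ξ : Fin n → ℝ, hor Γ x ξ u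
        = ((u, (0 : Fin n → ℝ)) : (Fin n → ℝ) × (Fin n → ℝ))
          + (((0 : Fin n → ℝ), -(Γ x u ξ)) : (Fin n → ℝ) × (Fin n → ℝ)) := by
      intro ξ; simp [hor, Prod.mk_add_mk]
    rw [hsplit, hsplit]
    simp only [map_add, ContinuousLinearMap.add_apply, Prod.fst_add]
    rw [vv_fderiv hU hg hΓ hgsymm hgpos hΓt hΓtsymm hΓtcompat hx (t • ζ) v v
          (-(Γ x u (t • ζ))),
        vv_fderiv hU hg hΓ hgsymm hgpos hΓt hΓtsymm hΓtcompat hx (0 : Fin n → ℝ) v v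
          (-(Γ x u (0 : Fin n → ℝ)))]
    simp only [map_add, map_zero, ContinuousLinearMap.add_apply,
      ContinuousLinearMap.zero_apply, add_zero]
    exact hh_fderiv_fst hU hg hΓ hgsymm hgpos hΓt hΓtsymm hΓtcompat hx (t • ζ) v u u
  have hT2 : g x ((fderiv ℝ Γt (x, t • ζ) ((0 : Fin n → ℝ), v) (hor Γ x (t • ζ) u)
        ((0 : Fin n → ℝ), v)).1) u
      = g x ((fderiv ℝ Γt (x, (0 : Fin n → ℝ)) ((0 : Fin n → ℝ), v)
        (hor Γ x (0 : Fin n → ℝ) u) ((0 : Fin n → ℝ), v)).1) u := by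
    simp only [hor]
    rw [hv_fderiv_fst hU hg hΓ hgsymm hgpos hΓt hΓtsymm hΓtcompat hx (t • ζ) u
          (-(Γ x u (t • ζ))) v v u,
        hv_fderiv_fst hU hg hΓ hgsymm hgpos hΓt hΓtsymm hΓtcompat hx (0 : Fin n → ℝ) u
          (-(Γ x u (0 : Fin n → ℝ))) v v u]
  have hT3 : g x ((Γt (x, t • ζ) (hor Γ x (t • ζ) u)
        (Γt (x, t • ζ) ((0 : Fin n → ℝ), v) ((0 : Fin n → ℝ), v))).1) u
      = g x ((Γt (x, (0 : Fin n → ℝ)) (hor Γ x (0 : Fin n → ℝ) u)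
        (Γt (x, (0 : Fin n → ℝ)) ((0 : Fin n → ℝ), v) ((0 : Fin n → ℝ), v))).1) u := by
    rw [vv_form hU hg hΓ hgsymm hgpos hΓtsymm hΓtcompat hx (t • ζ) v v,
        vv_form hU hg hΓ hgsymm hgpos hΓtsymm hΓtcompat hx (0 : Fin n → ℝ) v v]
    simp only [hor]
    have b1 := hh_pair hU hg hΓ hgsymm hgpos hΓtsymm hΓtcompat hx (t • ζ) u
      ((Γt (x, (0 : Fin n → ℝ)) (0, v) (0, v)).1) u
    have b2 := hh_pair hU hg hΓ hgsymm hgpos hΓtsymm hΓtcompat hx (0 : Fin n → ℝ) u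
      ((Γt (x, (0 : Fin n → ℝ)) (0, v) (0, v)).1) u
    linarith [b1, b2]
  have hq : (Γt (x, t • ζ) (hor Γ x (t • ζ) u) ((0 : Fin n → ℝ), v)).1
      = t • (Γt (x, ζ) (hor Γ x ζ u) ((0 : Fin n → ℝ), v)).1 := by
    apply g_inj g hgpos hx
    intro c
    have a1 := q_char hU hg hΓ hgsymm hgpos hΓtsymm hΓtcompat hx (t • ζ) u v c
    have a2 := q_char hU hg hΓ hgsymm hgpos hΓtsymm hΓtcompat hx ζ u v c
    rw [curv_smul_last] at a1
    simp only [map_smul, smul_eq_mul, ContinuousLinearMap.smul_apply] at a1 ⊢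
    linear_combination a1 / 2 - (t / 2) * a2
  have hq0 : (Γt (x, (0 : Fin n → ℝ)) (hor Γ x (0 : Fin n → ℝ) u) ((0 : Fin n → ℝ), v)).1
      = 0 := by
    apply g_inj g hgpos hx
    intro c
    have a1 := q_char hU hg hΓ hgsymm hgpos hΓtsymm hΓtcompat hx (0 : Fin n → ℝ) u v c
    rw [curv_zero_last] at a1
    simp only [map_zero, ContinuousLinearMap.zero_apply, ContinuousLinearMap.map_zero] at a1 ⊢
    linarith [a1]
  have hKt : (Γt (x, t • ζ) (hor Γ x (t • ζ) u) ((0 : Fin n → ℝ), v)).2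
        + Γ x (Γt (x, t • ζ) (hor Γ x (t • ζ) u) ((0 : Fin n → ℝ), v)).1 (t • ζ)
      = (Γt (x, (0 : Fin n → ℝ)) (hor Γ x (0 : Fin n → ℝ) u) ((0 : Fin n → ℝ), v)).2
        + Γ x (Γt (x, (0 : Fin n → ℝ)) (hor Γ x (0 : Fin n → ℝ) u)
            ((0 : Fin n → ℝ), v)).1 (0 : Fin n → ℝ) := by
    apply g_inj g hgpos hx
    intro c
    have k1 := k_char hU hg hΓ hgsymm hgpos hΓtsymm hΓtcompat hx (t • ζ) u v c
    have k2 := k_char hU hg hΓ hgsymm hgpos hΓtsymm hΓtcompat hx (0 : Fin n → ℝ) u v c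
    linarith [k1, k2]
  have hP2t : (Γt (x, t • ζ) (hor Γ x (t • ζ) u) ((0 : Fin n → ℝ), v)).2
      = ((Γt (x, (0 : Fin n → ℝ)) (hor Γ x (0 : Fin n → ℝ) u) ((0 : Fin n → ℝ), v)).2
          + Γ x (Γt (x, (0 : Fin n → ℝ)) (hor Γ x (0 : Fin n → ℝ) u)
              ((0 : Fin n → ℝ), v)).1 (0 : Fin n → ℝ))
        - Γ x (t • (Γt (x, ζ) (hor Γ x ζ u) ((0 : Fin n → ℝ), v)).1) (t • ζ) := by
    rw [← hq]
    exact eq_sub_of_add_eq hKt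
  have hT4 : g x ((Γt (x, t • ζ) ((0 : Fin n → ℝ), v)
        (Γt (x, t • ζ) (hor Γ x (t • ζ) u) ((0 : Fin n → ℝ), v))).1) u
      = g x ((Γt (x, (0 : Fin n → ℝ)) ((0 : Fin n → ℝ), v)
          (Γt (x, (0 : Fin n → ℝ)) (hor Γ x (0 : Fin n → ℝ) u) ((0 : Fin n → ℝ), v))).1) u
        - t ^ 2 * g x (Γt (x, ζ) (hor Γ x ζ u) ((0 : Fin n → ℝ), v)).1
            (Γt (x, ζ) (hor Γ x ζ u) ((0 : Fin n → ℝ), v)).1 := by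
    have Et := vH_pair hU hg hΓ hgsymm hgpos hΓtsymm hΓtcompat hx (t • ζ) v u
      (Γt (x, t • ζ) (hor Γ x (t • ζ) u) ((0 : Fin n → ℝ), v))
    have E0 := vH_pair hU hg hΓ hgsymm hgpos hΓtsymm hΓtcompat hx (0 : Fin n → ℝ) v u
      (Γt (x, (0 : Fin n → ℝ)) (hor Γ x (0 : Fin n → ℝ) u) ((0 : Fin n → ℝ), v))
    have hqq := q_char hU hg hΓ hgsymm hgpos hΓtsymm hΓtcompat hx ζ u v
      ((Γt (x, ζ) (hor Γ x ζ u) ((0 : Fin n → ℝ), v)).1)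
    rw [hq, hP2t] at Et
    rw [hq0] at E0
    simp only [curv, map_smul, map_add, map_sub, map_neg, map_zero, smul_eq_mul,
      ContinuousLinearMap.smul_apply, ContinuousLinearMap.add_apply,
      ContinuousLinearMap.sub_apply, ContinuousLinearMap.neg_apply,
      ContinuousLinearMap.zero_apply, ContinuousLinearMap.map_zero,
      neg_zero, add_zero, zero_add, sub_zero, neg_neg] at Et E0 hqq
    linear_combination Et / 2 - E0 / 2 + (t ^ 2 / 2) * hqq
  rw [pair_hor, pair_hor]
  simp only [curvT, Prod.fst_sub, Prod.fst_add, map_sub, map_add,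
    ContinuousLinearMap.sub_apply, ContinuousLinearMap.add_apply]
  rw [hT1, hT2, hT3, hT4]
  ring
end Aux7

theorem statement13 (n : ℕ) (hn : 1 ≤ n) (U : Set (Fin n → ℝ)) (hU : IsOpen U)
    (g : (Fin n → ℝ) → (Fin n → ℝ) →L[ℝ] (Fin n → ℝ) →L[ℝ] ℝ)
    (hg : ContDiffOn ℝ (⊤ : ℕ∞) g U)
    (hgsymm : ∀ x ∈ U, ∀ v w : Fin n → ℝ, g x v w = g x w v)
    (hgpos : ∀ x ∈ U, ∀ v : Fin n → ℝ, v ≠ 0 → 0 < g x v v)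
    (Γ : (Fin n → ℝ) → (Fin n → ℝ) →L[ℝ] (Fin n → ℝ) →L[ℝ] (Fin n → ℝ))
    (hΓ : ContDiffOn ℝ (⊤ : ℕ∞) Γ U)
    -- the Levi-Civita connection of the Sasaki metric, with Christoffel symbols Γt
    (Γt : (Fin n → ℝ) × (Fin n → ℝ) →
      ((Fin n → ℝ) × (Fin n → ℝ)) →L[ℝ] ((Fin n → ℝ) × (Fin n → ℝ)) →L[ℝ]
        ((Fin n → ℝ) × (Fin n → ℝ)))
    (hΓt : ContDiffOn ℝ (⊤ : ℕ∞) Γt {p | p.1 ∈ U})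
    (hΓtsymm : ∀ a : (Fin n → ℝ) × (Fin n → ℝ), a.1 ∈ U →
      ∀ A B : (Fin n → ℝ) × (Fin n → ℝ), Γt a A B = Γt a B A)
    (hΓtcompat : ∀ a : (Fin n → ℝ) × (Fin n → ℝ), a.1 ∈ U →
      ∀ A B C : (Fin n → ℝ) × (Fin n → ℝ),
        fderiv ℝ (fun p => sasaki g Γ p.1 p.2 B C) a A
          = sasaki g Γ a.1 a.2 (Γt a A B) C + sasaki g Γ a.1 a.2 B (Γt a A C))
    -- a g-orthonormal frame on U, used to compute the trace in the Ricci tensor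
    (e : (Fin n → ℝ) → Fin n → (Fin n → ℝ))
    (he : ∀ x ∈ U, ∀ i j, g x (e x i) (e x j) = if i = j then 1 else 0)
    -- the Sasaki metric is Einstein
    (hEinstein : ∃ lam : ℝ, ∀ a : (Fin n → ℝ) × (Fin n → ℝ), a.1 ∈ U →
      ∀ A B : (Fin n → ℝ) × (Fin n → ℝ),
        ricciT g Γ Γt e a A B = lam * sasaki g Γ a.1 a.2 A B) :
    ∀ x ∈ U, ∀ v w z : Fin n → ℝ, curv Γ x v w z = 0 := by
  intro x hx
  obtain ⟨lam, hlam⟩ := hEinstein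
  -- Step 1: the horizontal components `q` vanish
  have hqzero : ∀ (v ζ : Fin n → ℝ) (i : Fin n),
      (Γt (x, ζ) (hor Γ x ζ (e x i)) ((0 : Fin n → ℝ), v)).1 = 0 := by
    intro v ζ i
    have hric : ∀ t : ℝ, ricciT g Γ Γt e (x, t • ζ) ((0 : Fin n → ℝ), v) ((0 : Fin n → ℝ), v)
        = ricciT g Γ Γt e (x, (0 : Fin n → ℝ)) ((0 : Fin n → ℝ), v) ((0 : Fin n → ℝ), v)
          + t ^ 2 * ∑ j, g x (Γt (x, ζ) (hor Γ x ζ (e x j)) ((0 : Fin n → ℝ), v)).1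
              (Γt (x, ζ) (hor Γ x ζ (e x j)) ((0 : Fin n → ℝ), v)).1 := by
      intro t
      simp only [ricciT]
      rw [Finset.mul_sum, ← Finset.sum_add_distrib]
      apply Finset.sum_congr rfl
      intro j _
      rw [hor_term hU hg hΓ hgsymm hgpos hΓt hΓtsymm hΓtcompat hx v ζ t (e x j),
          ver_term hU hg hΓ hgsymm hgpos hΓt hΓtsymm hΓtcompat hx v ζ t (e x j)]
      ring
    have hsas : ∀ ξ : Fin n → ℝ,
        sasaki g Γ x ξ ((0 : Fin n → ℝ), v) ((0 : Fin n → ℝ), v) = g x v v := by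
      intro ξ; simp [sasaki]
    have hE : ∀ t : ℝ,
        ricciT g Γ Γt e (x, t • ζ) ((0 : Fin n → ℝ), v) ((0 : Fin n → ℝ), v)
          = lam * g x v v := by
      intro t
      rw [hlam (x, t • ζ) hx ((0 : Fin n → ℝ), v) ((0 : Fin n → ℝ), v)]
      rw [show ((x, t • ζ) : (Fin n → ℝ) × (Fin n → ℝ)).1 = x from rfl,
          show ((x, t • ζ) : (Fin n → ℝ) × (Fin n → ℝ)).2 = t • ζ from rfl, hsas]
    have hE0 : ricciT g Γ Γt e (x, (0 : Fin n → ℝ)) ((0 : Fin n → ℝ), v) ((0 : Fin n → ℝ), v)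
        = lam * g x v v := by
      rw [hlam (x, (0 : Fin n → ℝ)) hx ((0 : Fin n → ℝ), v) ((0 : Fin n → ℝ), v)]
      rw [show ((x, (0 : Fin n → ℝ)) : (Fin n → ℝ) × (Fin n → ℝ)).1 = x from rfl,
          show ((x, (0 : Fin n → ℝ)) : (Fin n → ℝ) × (Fin n → ℝ)).2 = (0 : Fin n → ℝ) from rfl,
          hsas]
    have hsum : ∑ j, g x (Γt (x, ζ) (hor Γ x ζ (e x j)) ((0 : Fin n → ℝ), v)).1
        (Γt (x, ζ) (hor Γ x ζ (e x j)) ((0 : Fin n → ℝ), v)).1 = 0 := by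
      have h1 := hric 1
      rw [hE 1, hE0] at h1
      linarith [h1]
    have hnn : ∀ j ∈ Finset.univ, (0:ℝ) ≤ g x (Γt (x, ζ) (hor Γ x ζ (e x j)) ((0 : Fin n → ℝ), v)).1
        (Γt (x, ζ) (hor Γ x ζ (e x j)) ((0 : Fin n → ℝ), v)).1 := by
      intro j _
      rcases eq_or_ne (Γt (x, ζ) (hor Γ x ζ (e x j)) ((0 : Fin n → ℝ), v)).1 0 with h | h
      · simp [h]
      · exact le_of_lt (hgpos x hx _ h)
    have hz := (Finset.sum_eq_zero_iff_of_nonneg hnn).mp hsum i (Finset.mem_univ i)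
    by_contra hne
    exact absurd hz (ne_of_gt (hgpos x hx _ hne))
  -- Step 2: curvature vanishes on the frame
  have hcurv : ∀ (c z : Fin n → ℝ) (i : Fin n), curv Γ x (e x i) c z = 0 := by
    intro c z i
    have hpair : ∀ v' : Fin n → ℝ, g x v' (curv Γ x (e x i) c z) = 0 := by
      intro v'
      have hqc := q_char hU hg hΓ hgsymm hgpos hΓtsymm hΓtcompat hx z (e x i) v' c
      rw [hqzero v' z i] at hqc
      simp only [map_zero, ContinuousLinearMap.zero_apply, ContinuousLinearMap.map_zero,
        mul_zero] at hqc
      linarith [hqc]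
    apply g_inj g hgpos hx
    intro c'
    rw [hgsymm x hx _ c', ← hgsymm x hx c' _]
    simp only [map_zero, ContinuousLinearMap.zero_apply, ContinuousLinearMap.map_zero]
    exact hpair c'
  -- Step 3: expand an arbitrary first argument in the frame
  intro v w z
  have hli : LinearIndependent ℝ (e x) := by
    rw [Fintype.linearIndependent_iff]
    intro coef hcoef j
    have h0 := congrArg (fun y => g x y (e x j)) hcoef
    simp only [map_sum, map_smul, map_zero, ContinuousLinearMap.sum_apply,
      ContinuousLinearMap.smul_apply, ContinuousLinearMap.zero_apply, smul_eq_mul] at h0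
    rw [Finset.sum_congr rfl (fun i _ => by rw [he x hx i j])] at h0
    simp only [mul_ite, mul_one, mul_zero, Finset.sum_ite_eq'] at h0
    simpa using h0
  haveI : Nonempty (Fin n) := ⟨⟨0, hn⟩⟩
  have hcard : Fintype.card (Fin n) = Module.finrank ℝ (Fin n → ℝ) := by simp
  let hb := basisOfLinearIndependentOfCardEqFinrank hli hcard
  have hbe : ⇑hb = e x := coe_basisOfLinearIndependentOfCardEqFinrank hli hcard
  -- curvature as a linear map in the first slot
  let T : (Fin n → ℝ) →ₗ[ℝ] (Fin n → ℝ) :=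
    { toFun := fun a => curv Γ x a w z
      map_add' := by
        intro a b
        simp only [curv, map_add, ContinuousLinearMap.add_apply]
        abel
      map_smul' := by
        intro r a
        simp only [curv, map_smul, ContinuousLinearMap.smul_apply, RingHom.id_apply,
          smul_sub, smul_add]
    }
  have hT : T = 0 := by
    apply Module.Basis.ext hb
    intro i
    rw [hbe]
    show curv Γ x (e x i) w z = 0
    exact hcurv w z i
  have := congrArg (fun f => f v) (congrArg DFunLike.coe hT)
  simpa [T] using this
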